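/- For arbitrary graphs G and H, ρ_e^o(G □ H) ≥ max{ ρ_e^o(G)·α(H), α(G)·ρ_e^o(H) }, where □ denotes the Cartesian product. -/

import Mathlib

open SimpleGraph

/-- An edge open packing (EOP) set: a set `B` of edges of `G` such that no edge of `G`
(other than the two edges themselves) joins an endvertex of one edge of `B` to an
endvertex of another edge of `B`. -/
def IsEOPSet {V : Type*} (G : SimpleGraph V) (B : Set (Sym2 V)) : Prop :=
  B ⊆ G.edgeSet ∧ ∀ e₁ ∈ B, ∀ e₂ ∈ B, e₁ ≠ e₂ →
    ∀ x ∈ e₁, ∀ y ∈ e₂, G.Adj x y → s(x, y) = e₁ ∨ s(x, y) = e₂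

/-- An induced matching: a set `M` of edges of `G` such that no edge of `G` joins an
endvertex of one edge of `M` to an endvertex of another edge of `M` (this in particular
forces `M` to be a matching). -/
def IsInducedMatching {V : Type*} (G : SimpleGraph V) (M : Set (Sym2 V)) : Prop :=
  M ⊆ G.edgeSet ∧ ∀ e₁ ∈ M, ∀ e₂ ∈ M, e₁ ≠ e₂ →
    ∀ x ∈ e₁, ∀ y ∈ e₂, ¬ G.Adj x y

/-- The edge open packing number `ρₑᵒ(G)`. -/
noncomputable def eopNum {V : Type*} (G : SimpleGraph V) : ℕ :=
  sSup {n | ∃ B : Finset (Sym2 V), IsEOPSet G ↑B ∧ B.card = n}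

/-- The induced matching number `ν_I(G)`. -/
noncomputable def inducedMatchingNum {V : Type*} (G : SimpleGraph V) : ℕ :=
  sSup {n | ∃ M : Finset (Sym2 V), IsInducedMatching G ↑M ∧ M.card = n}

/-- The independence number `α(G)`. -/
noncomputable def indepNum {V : Type*} (G : SimpleGraph V) : ℕ :=
  sSup {n | ∃ S : Finset V, (∀ x ∈ S, ∀ y ∈ S, ¬ G.Adj x y) ∧ S.card = n}

/-- The open packing number `ρᵒ(G)`: maximum size of a set of vertices whose open
neighborhoods are pairwise disjoint. -/
noncomputable def openPackNum {V : Type*} (G : SimpleGraph V) : ℕ :=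
  sSup {n | ∃ P : Finset V,
    (∀ x ∈ P, ∀ y ∈ P, x ≠ y → ∀ z, ¬ (G.Adj x z ∧ G.Adj y z)) ∧ P.card = n}

/-- The 2-packing number `ρ₂(G)`: maximum size of a set of vertices pairwise at
distance greater than 2. -/
noncomputable def twoPackNum {V : Type*} (G : SimpleGraph V) : ℕ :=
  sSup {n | ∃ P : Finset V,
    (∀ x ∈ P, ∀ y ∈ P, x ≠ y →
      ¬ G.Adj x y ∧ (∀ z, ¬ (G.Adj x z ∧ G.Adj z y))) ∧ P.card = n}

/-- The 3-packing number `ρ₃(G)`: maximum size of a set of vertices pairwise at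
distance greater than 3. -/
noncomputable def threePackNum {V : Type*} (G : SimpleGraph V) : ℕ :=
  sSup {n | ∃ P : Finset V,
    (∀ x ∈ P, ∀ y ∈ P, x ≠ y →
      ¬ G.Adj x y ∧ (∀ z, ¬ (G.Adj x z ∧ G.Adj z y)) ∧
      (∀ z w, ¬ (G.Adj x z ∧ G.Adj z w ∧ G.Adj w y))) ∧ P.card = n}

/-- Minimum degree of `G` (degrees measured via `Set.ncard` of neighborhoods). -/
noncomputable def minDeg {V : Type*} (G : SimpleGraph V) : ℕ :=
  sInf {d | ∃ v, d = (G.neighborSet v).ncard}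

/-- The lexicographic product `G ∘ H`. -/
def lexProd {V W : Type*} (G : SimpleGraph V) (H : SimpleGraph W) :
    SimpleGraph (V × W) where
  Adj x y := G.Adj x.1 y.1 ∨ (x.1 = y.1 ∧ H.Adj x.2 y.2)
  symm := ⟨by
    rintro ⟨g, h⟩ ⟨g', h'⟩ (hgg | ⟨rfl, hh⟩)
    · exact Or.inl hgg.symm
    · exact Or.inr ⟨rfl, hh.symm⟩⟩
  loopless := ⟨by
    rintro ⟨g, h⟩ (hgg | ⟨-, hh⟩)
    · exact G.loopless.irrefl g hgg
    · exact H.loopless.irrefl h hh⟩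

/-- The direct (tensor) product `G × H`. -/
def tensorProd {V W : Type*} (G : SimpleGraph V) (H : SimpleGraph W) :
    SimpleGraph (V × W) where
  Adj x y := G.Adj x.1 y.1 ∧ H.Adj x.2 y.2
  symm := ⟨by rintro ⟨g, h⟩ ⟨g', h'⟩ ⟨h1, h2⟩; exact ⟨h1.symm, h2.symm⟩⟩
  loopless := ⟨by rintro ⟨g, h⟩ ⟨h1, -⟩; exact G.loopless.irrefl g h1⟩

/-- The strong product `G ⊠ H`. -/
def strongProd {V W : Type*} (G : SimpleGraph V) (H : SimpleGraph W) :
    SimpleGraph (V × W) where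
  Adj x y := x ≠ y ∧ (x.1 = y.1 ∨ G.Adj x.1 y.1) ∧ (x.2 = y.2 ∨ H.Adj x.2 y.2)
  symm := ⟨by
    rintro x y ⟨hne, h1, h2⟩
    exact ⟨hne.symm, h1.imp Eq.symm (fun h => h.symm), h2.imp Eq.symm (fun h => h.symm)⟩⟩
  loopless := ⟨by rintro x ⟨hne, -, -⟩; exact hne rfl⟩

/-- The star `K_{1,r}` with center `none` and leaves `some i`. -/
def starGraph (r : ℕ) : SimpleGraph (Option (Fin r)) :=
  SimpleGraph.fromRel (fun x _ => x = none)

/-- The spider `S^k`: obtained from `K_{1,k}` by subdividing every edge exactly once.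
The center is `none`, `some (i, false)` are the support vertices and `some (i, true)`
the leaves. -/
def spiderGraph (k : ℕ) : SimpleGraph (Option (Fin k × Bool)) :=
  SimpleGraph.fromRel (fun x y =>
    (x = none ∧ ∃ i, y = some (i, false)) ∨
    (∃ i, x = some (i, false) ∧ y = some (i, true)))

/-- The `n`-dimensional hypercube `Q_n`: vertices are `Fin n → Bool`, adjacent iff they
differ in exactly one coordinate. -/
def hypercube (n : ℕ) : SimpleGraph (Fin n → Bool) :=
  SimpleGraph.fromRel (fun x y =>
    (Finset.univ.filter (fun i => x i ≠ y i)).card = 1)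

/-- The corona product `G ⊙ H`: vertices `(v, none)` form a copy of `G`, vertices
`(v, some h)` form a copy of `H` for each `v`, and `(v, none)` is joined to every
vertex of its copy of `H`. -/
def corona {V W : Type*} (G : SimpleGraph V) (H : SimpleGraph W) :
    SimpleGraph (V × Option W) :=
  SimpleGraph.fromRel (fun x y =>
    (x.2 = none ∧ y.2 = none ∧ G.Adj x.1 y.1) ∨
    (x.1 = y.1 ∧ ∃ h h', x.2 = some h ∧ y.2 = some h' ∧ H.Adj h h') ∨
    (x.1 = y.1 ∧ x.2 = none ∧ ∃ h, y.2 = some h))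

/-- The set of endvertices of the edges of `B`. -/
def supportSet {V : Type*} (B : Set (Sym2 V)) : Set V := {v | ∃ e ∈ B, v ∈ e}

/- In `G □ H`, the copies `G × {s}`, `s ∈ S`, of `G` over an independent set `S` of `H` are
pairwise non-adjacent, so the copies of a maximum edge open packing of `G` in these layers
together form an edge open packing of `G □ H` of size `ρₑᵒ(G)·|S|`. The other bound follows
from the symmetry `G □ H ≃g H □ G`. -/

namespace IsEOPSet

variable {V V' : Type*} {G : SimpleGraph V} {G' : SimpleGraph V'}

lemma map (f : G ↪g G') {B : Set (Sym2 V)} (hB : IsEOPSet G B) :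
    IsEOPSet G' (Sym2.map f '' B) := by
  refine ⟨?_, ?_⟩
  · rintro _ ⟨e, he, rfl⟩
    exact f.map_mem_edgeSet_iff.mpr (hB.1 he)
  · rintro _ ⟨e₁, he₁, rfl⟩ _ ⟨e₂, he₂, rfl⟩ hne _ hx _ hy hadj
    obtain ⟨a, ha, rfl⟩ := Sym2.mem_map.mp hx
    obtain ⟨b, hb, rfl⟩ := Sym2.mem_map.mp hy
    have hmap : s(f a, f b) = Sym2.map f s(a, b) := (Sym2.map_mk f a b).symm
    rw [hmap, (Sym2.map.injective f.injective).eq_iff, (Sym2.map.injective f.injective).eq_iff]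
    exact hB.2 e₁ he₁ e₂ he₂ (ne_of_apply_ne _ hne) a ha b hb (f.map_adj_iff.mp hadj)

lemma biUnion {ι : Type*} {S : Set ι} {B : ι → Set (Sym2 V)}
    (hB : ∀ i ∈ S, IsEOPSet G (B i))
    (hsep : ∀ i ∈ S, ∀ j ∈ S, i ≠ j →
      ∀ e₁ ∈ B i, ∀ e₂ ∈ B j, ∀ x ∈ e₁, ∀ y ∈ e₂, ¬ G.Adj x y) :
    IsEOPSet G (⋃ i ∈ S, B i) := by
  refine ⟨Set.iUnion₂_subset fun i hi => (hB i hi).1, ?_⟩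
  intro e₁ he₁ e₂ he₂ hne x hx y hy hadj
  obtain ⟨i, hi, he₁⟩ := Set.mem_iUnion₂.mp he₁
  obtain ⟨j, hj, he₂⟩ := Set.mem_iUnion₂.mp he₂
  obtain rfl | hij := eq_or_ne i j
  · exact (hB i hi).2 e₁ he₁ e₂ he₂ hne x hx y hy hadj
  · exact absurd hadj (hsep i hi j hj hij e₁ he₁ e₂ he₂ x hx y hy)

end IsEOPSet

section Extremal

lemma bddAbove_card_of_finite {α : Type*} [Finite α] (P : Finset α → Prop) :
    BddAbove {n | ∃ s : Finset α, P s ∧ s.card = n} := by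
  have := Fintype.ofFinite α
  exact ⟨Fintype.card α, by rintro n ⟨s, -, rfl⟩; exact s.card_le_univ⟩

variable {V V' : Type*} [Finite V] (G : SimpleGraph V)

lemma card_le_eopNum (B : Finset (Sym2 V)) (hB : IsEOPSet G B) : B.card ≤ eopNum G :=
  le_csSup (bddAbove_card_of_finite _) ⟨B, hB, rfl⟩

lemma exists_isEOPSet_card_eq_eopNum :
    ∃ B : Finset (Sym2 V), IsEOPSet G B ∧ B.card = eopNum G := by
  refine Nat.sSup_mem ?_ (bddAbove_card_of_finite _)
  exact ⟨0, ∅, by simp [IsEOPSet], rfl⟩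

lemma exists_indep_card_eq_indepNum :
    ∃ S : Finset V, (∀ x ∈ S, ∀ y ∈ S, ¬ G.Adj x y) ∧ S.card = _root_.indepNum G := by
  refine Nat.sSup_mem ?_ (bddAbove_card_of_finite _)
  exact ⟨0, ∅, by simp, rfl⟩

lemma eopNum_le_of_embedding {G' : SimpleGraph V'} [Finite V'] (f : G ↪g G') :
    eopNum G ≤ eopNum G' := by
  classical
  obtain ⟨B, hB, hcard⟩ := exists_isEOPSet_card_eq_eopNum G
  calc eopNum G = (B.image (Sym2.map f)).card := by
        rw [Finset.card_image_of_injective _ (Sym2.map.injective f.injective), hcard]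
    _ ≤ eopNum G' := card_le_eopNum G' _ (by simpa using hB.map f)

end Extremal

section BoxProd

variable {V W : Type*} {G : SimpleGraph V} {H : SimpleGraph W}

lemma snd_eq_of_mem_map_boxProdLeft {s : W} {e : Sym2 V} {x : V × W}
    (hx : x ∈ Sym2.map (boxProdLeft G H s) e) : x.2 = s := by
  obtain ⟨a, -, rfl⟩ := Sym2.mem_map.mp hx
  rfl

lemma card_mul_card_le_eopNum_boxProd [Finite V] [Finite W]
    {B : Finset (Sym2 V)} (hB : IsEOPSet G B)
    {S : Finset W} (hS : ∀ x ∈ S, ∀ y ∈ S, ¬ H.Adj x y) :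
    B.card * S.card ≤ eopNum (G □ H) := by
  classical
  let layer : W → Finset (Sym2 (V × W)) := fun s => B.image (Sym2.map (boxProdLeft G H s))
  have hlayer_card (s : W) : (layer s).card = B.card :=
    Finset.card_image_of_injective _ (Sym2.map.injective (boxProdLeft G H s).injective)
  have hdisj : (S : Set W).PairwiseDisjoint layer := by
    intro s _ t _ hst
    refine Finset.disjoint_left.mpr fun e hes het => hst ?_
    obtain ⟨f, -, hfe⟩ := Finset.mem_image.mp hes
    obtain ⟨f', -, hfe'⟩ := Finset.mem_image.mp het
    obtain ⟨x, hx⟩ : ∃ x, x ∈ e := ⟨_, Sym2.out_fst_mem e⟩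
    exact (snd_eq_of_mem_map_boxProdLeft (hfe ▸ hx)).symm.trans
      (snd_eq_of_mem_map_boxProdLeft (hfe' ▸ hx))
  have hpacking : IsEOPSet (G □ H) (S.biUnion layer : Set (Sym2 (V × W))) := by
    rw [Finset.coe_biUnion]
    refine IsEOPSet.biUnion (fun s _ => by simpa [layer] using hB.map (boxProdLeft G H s)) ?_
    intro s hs t ht hst e₁ he₁ e₂ he₂ x hx y hy hadj
    obtain ⟨_, -, rfl⟩ := Finset.mem_image.mp he₁
    obtain ⟨_, -, rfl⟩ := Finset.mem_image.mp he₂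
    have hxs := snd_eq_of_mem_map_boxProdLeft hx
    have hyt := snd_eq_of_mem_map_boxProdLeft hy
    rcases boxProd_adj.mp hadj with ⟨-, hxy⟩ | ⟨hxy, -⟩
    · exact hst (hxs ▸ hyt ▸ hxy)
    · exact hS s hs t ht (hxs ▸ hyt ▸ hxy)
  calc B.card * S.card = (S.biUnion layer).card := by
        rw [Finset.card_biUnion hdisj, Finset.sum_congr rfl fun s _ => hlayer_card s,
          Finset.sum_const, smul_eq_mul, mul_comm]
    _ ≤ eopNum (G □ H) := card_le_eopNum _ _ hpacking

lemma eopNum_mul_indepNum_le_eopNum_boxProd [Finite V] [Finite W] :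
    eopNum G * _root_.indepNum H ≤ eopNum (G □ H) := by
  obtain ⟨B, hB, hBcard⟩ := exists_isEOPSet_card_eq_eopNum G
  obtain ⟨S, hS, hScard⟩ := exists_indep_card_eq_indepNum H
  rw [← hBcard, ← hScard]
  exact card_mul_card_le_eopNum_boxProd hB hS

end BoxProd

/-- For arbitrary graphs `G` and `H`, `ρₑᵒ(G □ H) ≥ max{ρₑᵒ(G)·α(H), α(G)·ρₑᵒ(H)}`. -/
theorem stmt_14 {V W : Type*} [Fintype V] [Fintype W]
    (G : SimpleGraph V) (H : SimpleGraph W) :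
    max (eopNum G * _root_.indepNum H) (_root_.indepNum G * eopNum H) ≤ eopNum (G.boxProd H) := by
  refine max_le eopNum_mul_indepNum_le_eopNum_boxProd ?_
  calc _root_.indepNum G * eopNum H = eopNum H * _root_.indepNum G := mul_comm _ _
    _ ≤ eopNum (H □ G) := eopNum_mul_indepNum_le_eopNum_boxProd
    _ ≤ eopNum (G □ H) := eopNum_le_of_embedding _ (boxProdComm H G).toEmbedding
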